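/- arXiv:2001.11948 — 4 statements merged into one kernel-verified Lean document; each statement's English description precedes it below -/
import Mathlib

section
/- Let G : [0,∞) → ℝ be continuous, and suppose m : [0,∞) → ℝ is continuous and satisfies the Volterra integral equation m(t) = G(t) - ∫_0^t G(t - τ) m(τ) dτ for all t ≥ 0. If G(t) ≤ 0 for all t ≥ 0, then m(t) ≤ 0 for all t ≥ 0. -/
/-!
Since `G ≤ 0`, replacing `m` by its positive part can only increase `-∫ G (t - τ) m τ`, so
`m⁺ t ≤ K ∫₀ᵗ m⁺` with `K` a bound for `|G|` on `[0, T]`. Grönwall's inequality, applied to the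
primitive of `m⁺` (which vanishes at `0`), then forces `m⁺ = 0`.
-/

open Set

theorem eq_zero_of_le_mul_integral {u : ℝ → ℝ} {K a b : ℝ} (hu : Continuous u)
    (hu_nonneg : ∀ t ∈ Icc a b, 0 ≤ u t) (hle : ∀ t ∈ Icc a b, u t ≤ K * ∫ τ in a..t, u τ) :
    ∀ t ∈ Icc a b, u t = 0 := by
  set F : ℝ → ℝ := fun t => ∫ τ in a..t, u τ
  have hF_nonneg : ∀ t ∈ Icc a b, 0 ≤ F t := fun t ht =>
    intervalIntegral.integral_nonneg ht.1 fun τ hτ => hu_nonneg τ ⟨hτ.1, hτ.2.trans ht.2⟩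
  have hF_deriv : ∀ t, HasDerivAt F (u t) t := fun t => (hu.integral_hasStrictDerivAt a t).hasDerivAt
  have hF_zero : ∀ t ∈ Icc a b, F t = 0 := by
    refine eq_zero_of_abs_deriv_le_mul_abs_self_of_eq_zero_right (K := K)
      (fun t _ => (hF_deriv t).continuousAt.continuousWithinAt)
      (fun t _ => (hF_deriv t).hasDerivWithinAt)
      intervalIntegral.integral_same fun t ht => ?_
    have ht' : t ∈ Icc a b := Ico_subset_Icc_self ht
    rw [Real.norm_of_nonneg (hu_nonneg t ht'), Real.norm_of_nonneg (hF_nonneg t ht')]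
    exact hle t ht'
  intro t ht
  refine le_antisymm ?_ (hu_nonneg t ht)
  calc u t ≤ K * F t := hle t ht
    _ = 0 := by rw [hF_zero t ht, mul_zero]

theorem posPart_le_mul_integral_of_volterra {G m : ℝ → ℝ} {K t : ℝ} (hG : Continuous G)
    (hm : Continuous m) (ht : 0 ≤ t) (heq : m t = G t - ∫ τ in (0:ℝ)..t, G (t - τ) * m τ)
    (hG_nonpos : ∀ s ∈ Icc 0 t, G s ≤ 0) (hGK : ∀ s ∈ Icc 0 t, ‖G s‖ ≤ K) :
    (m t)⁺ ≤ K * ∫ τ in (0:ℝ)..t, (m τ)⁺ := by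
  have hm_pos : Continuous fun τ => (m τ)⁺ := hm.max continuous_const
  have hK : 0 ≤ K := (norm_nonneg _).trans (hGK 0 ⟨le_rfl, ht⟩)
  have hkernel : ∀ τ ∈ Icc 0 t, -(G (t - τ) * m τ) ≤ K * (m τ)⁺ := fun τ hτ => by
    have hs : t - τ ∈ Icc 0 t := ⟨by linarith [hτ.2], by linarith [hτ.1]⟩
    have hG_le : -G (t - τ) ≤ K := (neg_le_abs _).trans (hGK _ hs)
    calc -(G (t - τ) * m τ) = -G (t - τ) * m τ := by ring
      _ ≤ -G (t - τ) * (m τ)⁺ :=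
          mul_le_mul_of_nonneg_left (le_posPart _) (neg_nonneg.2 (hG_nonpos _ hs))
      _ ≤ K * (m τ)⁺ := mul_le_mul_of_nonneg_right hG_le (posPart_nonneg _)
  have hint : -∫ τ in (0:ℝ)..t, G (t - τ) * m τ ≤ K * ∫ τ in (0:ℝ)..t, (m τ)⁺ := by
    rw [← intervalIntegral.integral_neg, ← intervalIntegral.integral_const_mul]
    exact intervalIntegral.integral_mono_on ht
      (((hG.comp (continuous_const.sub continuous_id)).mul hm).neg.intervalIntegrable _ _)
      ((continuous_const.mul hm_pos).intervalIntegrable _ _) hkernel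
  have hrhs : 0 ≤ K * ∫ τ in (0:ℝ)..t, (m τ)⁺ :=
    mul_nonneg hK (intervalIntegral.integral_nonneg ht fun τ _ => posPart_nonneg _)
  refine max_le ?_ hrhs
  linarith [hG_nonpos t ⟨ht, le_rfl⟩]

theorem stmt2 (G m : ℝ → ℝ) (hG : Continuous G) (hm : Continuous m)
    (heq : ∀ t, 0 ≤ t → m t = G t - ∫ τ in (0:ℝ)..t, G (t - τ) * m τ)
    (hGneg : ∀ t, 0 ≤ t → G t ≤ 0) :
    ∀ t, 0 ≤ t → m t ≤ 0 := by
  intro T hT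
  obtain ⟨K, hGK⟩ := isCompact_Icc.exists_bound_of_continuousOn (hG.continuousOn (s := Icc 0 T))
  have hm_pos_bound : ∀ t ∈ Icc 0 T, (m t)⁺ ≤ K * ∫ τ in (0:ℝ)..t, (m τ)⁺ := fun t ht =>
    posPart_le_mul_integral_of_volterra hG hm ht.1 (heq t ht.1) (fun s hs => hGneg s hs.1)
      fun s hs => hGK s ⟨hs.1, hs.2.trans ht.2⟩
  exact posPart_eq_zero.1 <| eq_zero_of_le_mul_integral (hm.max continuous_const)
    (fun t _ => posPart_nonneg _) hm_pos_bound T ⟨hT, le_rfl⟩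
end

section
/- Let x₁, x₂, x₃ ≥ 0 with x₁ + x₂ + x₃ = 1 and define Y_k(t) = e^{-2 x_k t}(x_k − 1) and γ^{Red}_k(t) = −Y_i(t) − Y_j(t) + Y_k(t) for {i,j,k} = {1,2,3}, i≠j≠k. Then for all i ≠ j and all t ≥ 0, γ^{Red}_i(t) + γ^{Red}_j(t) = 2(1 − x_k) e^{-2 x_k t} ≥ 0, where k is the remaining index. -/
theorem stmt12 (x : Fin 3 → ℝ) (hx : ∀ k, 0 ≤ x k)
    (hsum : x 0 + x 1 + x 2 = 1)
    (Y : Fin 3 → ℝ → ℝ)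
    (hY : ∀ k t, Y k t = Real.exp (-2 * x k * t) * (x k - 1))
    (γ : Fin 3 → ℝ → ℝ)
    (hγ : ∀ i j k : Fin 3, i ≠ j → j ≠ k → i ≠ k → ∀ t,
      γ k t = -(Y i t) - Y j t + Y k t) :
    ∀ i j k : Fin 3, i ≠ j → j ≠ k → i ≠ k → ∀ t, 0 ≤ t →
      γ i t + γ j t = 2 * (1 - x k) * Real.exp (-2 * x k * t) ∧
      0 ≤ 2 * (1 - x k) * Real.exp (-2 * x k * t) := by
  intro i j k hij hjk hik t _
  have hxk : x k ≤ 1 := by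
    calc x k ≤ ∑ l, x l := Finset.single_le_sum (fun l _ ↦ hx l) (Finset.mem_univ k)
      _ = 1 := by rw [Fin.sum_univ_three, hsum]
  have hpair : γ i t + γ j t = -2 * Y k t := by
    rw [hγ j k i hjk hik.symm hij.symm, hγ i k j hik hjk.symm hij]
    ring
  refine ⟨by rw [hpair, hY]; ring, ?_⟩
  exact mul_nonneg (mul_nonneg zero_le_two (sub_nonneg.2 hxk)) (Real.exp_pos _).le
end

section
/- For the eternally non-Markovian choice x₁ = x₂ = 1/2, x₃ = 0, the rate γ₃ defined by γ₃(t) = −μ₁(t) − μ₂(t) + μ₃(t), with μ₁(t) = −(x₂+x₃)/(x₂+x₃+e^{2t}x₁), μ₂(t) = −(x₃+x₁)/(x₃+x₁+e^{2t}x₂), μ₃(t) = −(x₁+x₂)/(x₁+x₂+e^{2t}x₃), equals −tanh(t), and hence γ₃(t) < 0 for all t > 0. -/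
/-!
For `x₁ = x₂ = 1/2`, `x₃ = 0` one has `μ₁ = μ₂ = -1/(1 + e^{2t})` and `μ₃ = -1`, so
`γ₃ = 2/(1 + e^{2t}) - 1 = -tanh t`, which is negative for `t > 0`.
-/

namespace Real

theorem tanh_pos_of_pos {t : ℝ} (ht : 0 < t) : 0 < tanh t := by
  rw [tanh_eq_sinh_div_cosh]
  exact div_pos (sinh_pos_iff.mpr ht) (cosh_pos t)

theorem tanh_eq_one_sub_two_div (t : ℝ) : tanh t = 1 - 2 / (exp (2 * t) + 1) := by
  have hexp : exp (2 * t) = exp t ^ 2 := by rw [← exp_nat_mul]; norm_num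
  rw [tanh_eq, exp_neg, hexp]
  field_simp
  ring

end Real

theorem stmt13 (x₁ x₂ x₃ : ℝ) (h1 : x₁ = 1/2) (h2 : x₂ = 1/2) (h3 : x₃ = 0)
    (μ₁ μ₂ μ₃ γ₃ : ℝ → ℝ)
    (hμ1 : ∀ t, μ₁ t = -(x₂ + x₃) / (x₂ + x₃ + Real.exp (2*t) * x₁))
    (hμ2 : ∀ t, μ₂ t = -(x₃ + x₁) / (x₃ + x₁ + Real.exp (2*t) * x₂))
    (hμ3 : ∀ t, μ₃ t = -(x₁ + x₂) / (x₁ + x₂ + Real.exp (2*t) * x₃))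
    (hγ : ∀ t, γ₃ t = -μ₁ t - μ₂ t + μ₃ t) :
    (∀ t, γ₃ t = -Real.tanh t) ∧ (∀ t, 0 < t → γ₃ t < 0) := by
  subst h1 h2 h3
  have hγ_tanh : ∀ t, γ₃ t = -Real.tanh t := by
    intro t
    rw [hγ, hμ1, hμ2, hμ3, Real.tanh_eq_one_sub_two_div]
    field_simp
    ring
  refine ⟨hγ_tanh, fun t ht => ?_⟩
  rw [hγ_tanh, neg_lt_zero]
  exact Real.tanh_pos_of_pos ht
end

section
/- On ℂ³ with ladder operators S_+ = E₁₂ + E₂₃ and S_- = E₂₁ + E₃₂ (E_{ij} the matrix units), the self-adjoint superoperator K(ω) = S_- ω S_+ − (1/2)(S_+S_- ω + ω S_+S_-) + S_+ ω S_- − (1/2)(S_-S_+ ω + ω S_-S_+) has eigenvalues (with multiplicity, on a suitable orthonormal basis of 3×3 matrices) {0, −3, −5/2, −5/2, −1, −1, −1, −1/2, −1/2}. -/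
open Matrix

noncomputable def Sp : Matrix (Fin 3) (Fin 3) ℂ := !![0,1,0; 0,0,1; 0,0,0]
noncomputable def Sm : Matrix (Fin 3) (Fin 3) ℂ := !![0,0,0; 1,0,0; 0,1,0]

/-!
`K` is the sum of the Lindblad dissipators of `S₋` and of `S₊ = S₋ᴴ`. The ladder operators have
rational entries, so the eigenvalue equations and the Hilbert–Schmidt orthogonality of the nine
explicit integer eigenmatrices can be checked by exact arithmetic over `ℚ`; dividing each
eigenmatrix by its norm then gives the orthonormal basis.
-/

section Dissipator

variable {n R S : Type*} [Fintype n] [Field R] [Field S]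

/-- The Lindblad dissipator `ω ↦ L ω L† - ½ {L† L, ω}`, with `L'` in the role of `L†` so that it
makes sense over `ℚ`. -/
def dissipator (L L' ω : Matrix n n R) : Matrix n n R :=
  L * ω * L' - (1 / 2 : R) • (L' * L * ω + ω * (L' * L))

theorem dissipator_smul (L L' ω : Matrix n n R) (c : R) :
    dissipator L L' (c • ω) = c • dissipator L L' ω := by
  simp only [dissipator, Matrix.mul_smul, Matrix.smul_mul, smul_add, smul_sub, smul_comm c]

theorem map_dissipator (f : R →+* S) (L L' ω : Matrix n n R) :
    (dissipator L L' ω).map f = dissipator (L.map f) (L'.map f) (ω.map f) := by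
  simp [dissipator, Matrix.map_sub, Matrix.map_add, Matrix.map_mul, Matrix.map_smul', map_ofNat]

end Dissipator

theorem trace_conjTranspose_mul_map_ratCast {m n : Type*} [Fintype m] [Fintype n]
    (A B : Matrix m n ℚ) :
    trace ((A.map (Rat.castHom ℂ))ᴴ * B.map (Rat.castHom ℂ)) = ((trace (Aᵀ * B) : ℚ) : ℂ) := by
  rw [← conjTranspose_map _ (fun q => by simp), conjTranspose_eq_transpose_of_trivial,
    ← Matrix.map_mul]
  exact (AddMonoidHom.map_trace (Rat.castHom ℂ) _).symm

theorem trace_conjTranspose_mul_inv_sqrt_smul {n ι : Type*} [Fintype n] [DecidableEq ι]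
    (M : ι → Matrix n n ℂ) (g : ι → ℝ) (hg : ∀ i, 0 < g i)
    (hM : ∀ i j, trace ((M i)ᴴ * M j) = if i = j then (g i : ℂ) else 0) (i j : ι) :
    trace (((√(g i) : ℂ)⁻¹ • M i)ᴴ * ((√(g j) : ℂ)⁻¹ • M j)) = if i = j then 1 else 0 := by
  rw [conjTranspose_smul, smul_mul_smul_comm, trace_smul, hM]
  split_ifs with hij
  · subst hij
    have hs : (√(g i) : ℂ) ≠ 0 := by exact_mod_cast (Real.sqrt_pos.2 (hg i)).ne'
    have hsq : (√(g i) : ℂ) ^ 2 = g i := by exact_mod_cast Real.sq_sqrt (hg i).le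
    simp only [star_inv₀, Complex.star_def, Complex.conj_ofReal, smul_eq_mul, ← hsq]
    field_simp
  · simp

namespace SpinOne

def raise : Matrix (Fin 3) (Fin 3) ℚ := !![0,1,0; 0,0,1; 0,0,0]
def lower : Matrix (Fin 3) (Fin 3) ℚ := !![0,0,0; 1,0,0; 0,1,0]

def eigenmatrix : Fin 9 → Matrix (Fin 3) (Fin 3) ℚ :=
  ![!![1,0,0; 0,1,0; 0,0,1], !![1,0,0; 0,-2,0; 0,0,1],
    !![0,1,0; 0,0,-1; 0,0,0], !![0,0,0; 1,0,0; 0,-1,0],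
    !![0,0,1; 0,0,0; 0,0,0], !![0,0,0; 0,0,0; 1,0,0], !![1,0,0; 0,0,0; 0,0,-1],
    !![0,1,0; 0,0,1; 0,0,0], !![0,0,0; 1,0,0; 0,1,0]]

def eigenvalue : Fin 9 → ℚ := ![0, -3, -5/2, -5/2, -1, -1, -1, -1/2, -1/2]

def normSq : Fin 9 → ℚ := ![3, 6, 2, 2, 1, 1, 2, 2, 2]

theorem normSq_pos : ∀ i, 0 < normSq i := by decide +kernel

theorem trace_transpose_eigenmatrix_mul :
    ∀ i j, trace ((eigenmatrix i)ᵀ * eigenmatrix j) = if i = j then normSq i else 0 := by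
  decide +kernel

theorem dissipator_add_dissipator_eigenmatrix : ∀ i,
    dissipator lower raise (eigenmatrix i) + dissipator raise lower (eigenmatrix i) =
      eigenvalue i • eigenmatrix i := by
  decide +kernel

theorem map_raise : raise.map (Rat.castHom ℂ) = Sp := by
  ext i j; fin_cases i <;> fin_cases j <;> simp [Sp, raise]

theorem map_lower : lower.map (Rat.castHom ℂ) = Sm := by
  ext i j; fin_cases i <;> fin_cases j <;> simp [Sm, lower]

theorem ratCast_eigenvalue (i : Fin 9) :
    ((eigenvalue i : ℚ) : ℂ) = ![0, -3, -5/2, -5/2, -1, -1, -1, -1/2, -1/2] i := by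
  fin_cases i <;> norm_num [eigenvalue]

theorem trace_conjTranspose_map_eigenmatrix_mul (i j : Fin 9) :
    trace (((eigenmatrix i).map (Rat.castHom ℂ))ᴴ * (eigenmatrix j).map (Rat.castHom ℂ)) =
      if i = j then ((normSq i : ℝ) : ℂ) else 0 := by
  rw [trace_conjTranspose_mul_map_ratCast, trace_transpose_eigenmatrix_mul]
  split_ifs <;> simp

theorem dissipator_add_dissipator_map_eigenmatrix (i : Fin 9) :
    dissipator Sm Sp ((eigenmatrix i).map (Rat.castHom ℂ)) +
        dissipator Sp Sm ((eigenmatrix i).map (Rat.castHom ℂ)) =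
      ((eigenvalue i : ℚ) : ℂ) • (eigenmatrix i).map (Rat.castHom ℂ) := by
  rw [← map_raise, ← map_lower, ← map_dissipator, ← map_dissipator,
    ← Matrix.map_add _ (map_add _), dissipator_add_dissipator_eigenmatrix,
    Matrix.map_smul' _ _ _ (map_mul _), Rat.coe_castHom]

end SpinOne

open SpinOne in
theorem stmt15 (K : Matrix (Fin 3) (Fin 3) ℂ → Matrix (Fin 3) (Fin 3) ℂ)
    (hK : ∀ ω, K ω = Sm * ω * Sp - ((1:ℂ)/2) • (Sp * Sm * ω + ω * (Sp * Sm)) +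
      Sp * ω * Sm - ((1:ℂ)/2) • (Sm * Sp * ω + ω * (Sm * Sp))) :
    ∃ B : Fin 9 → Matrix (Fin 3) (Fin 3) ℂ,
      (∀ i j, Matrix.trace ((B i)ᴴ * B j) = if i = j then 1 else 0) ∧
      (∀ i, K (B i) =
        (![0, -3, -5/2, -5/2, -1, -1, -1, -1/2, -1/2] i : ℂ) • B i) := by
  have hK_dissipator : ∀ ω, K ω = dissipator Sm Sp ω + dissipator Sp Sm ω := fun ω => by
    rw [hK, dissipator, dissipator, add_sub_assoc]
  refine ⟨fun i => ((√(normSq i : ℝ) : ℂ))⁻¹ • (eigenmatrix i).map (Rat.castHom ℂ),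
    trace_conjTranspose_mul_inv_sqrt_smul _ _ (fun i => by exact_mod_cast normSq_pos i)
      trace_conjTranspose_map_eigenmatrix_mul, fun i => ?_⟩
  rw [hK_dissipator, dissipator_smul, dissipator_smul, ← smul_add,
    dissipator_add_dissipator_map_eigenmatrix, smul_comm, ratCast_eigenvalue]
end
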